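/- For n ≥ 1, the number of permutations of [2n+1] with exactly n descents whose associated lattice path is a Dyck path (all points (x,y) on the path satisfy y ≤ x) equals the number of permutations of [2n] with n-1 or n descents divided as A(n-1,2n) + A(n,2n), via the bijection that cycles the permutation until 2n+1 is last and deletes it. -/

import Mathlib

open scoped Classical

/-- Number of descents of `w` occurring among the first `ℓ` positions
(0-indexed: position `i` is a descent if `w i > w (i+1)`). -/
noncomputable def descentsIn {N : ℕ} (w : Equiv.Perm (Fin N)) (ℓ : ℕ) : ℕ :=
  ((Finset.range ℓ).filter (fun i =>
    ∃ h : i + 1 < N, w ⟨i + 1, h⟩ < w ⟨i, Nat.lt_of_succ_lt h⟩)).card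

/-- Total number of descents of a permutation of `[N]`. -/
noncomputable def descents {N : ℕ} (w : Equiv.Perm (Fin N)) : ℕ :=
  descentsIn w (N - 1)

/-- The Eulerian number `A(m, N)`: the number of permutations of `[N]`
with exactly `m` descents. -/
noncomputable def eulerian (m N : ℕ) : ℕ :=
  (Finset.univ.filter (fun w : Equiv.Perm (Fin N) => descents w = m)).card


/-- `w ∈ S_{2n+1}` with `n` descents has a Dyck lattice path: after `ℓ` steps
the path is at `(ℓ - d_ℓ, d_ℓ)`, and every point `(x,y)` satisfies `y ≤ x`. -/
noncomputable def IsDyckPerm (n : ℕ) (w : Equiv.Perm (Fin (2 * n + 1))) : Prop :=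
  descents w = n ∧ ∀ ℓ ≤ 2 * n, descentsIn w ℓ ≤ ℓ - descentsIn w ℓ

/-!
Read `u ∈ S_{2n+1}` cyclically and let `cyclicHeight u` be the walk that steps `+1` at each cyclic
ascent and `-1` at each cyclic descent; over one period of `2n+1` steps it drifts by some `ε`.
The rotation of `u` starting at position `k` is a Dyck permutation exactly when the walk started
at `k` stays weakly above its starting height for `2n` steps and is back there after them
(`IsCycleStart`). By the cycle lemma such a `k` exists iff `ε = ±1`, and it is then unique.
Every permutation of `[2n+1]` is uniquely a rotation of `consZero w`, the word `w ∈ S_{2n}` with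
a new smallest letter put in front, and the drift of `consZero w` is `2n - 1 - 2 des(w)`, which
is `±1` exactly when `des(w) ∈ {n-1, n}`. (So the bijection used here rotates the smallest letter
to the front and deletes it, rather than the largest letter to the end.)
-/

open Equiv Finset Fin.NatCast

theorem exists_first_minimizer (T : ℕ → ℤ) (p : ℕ) :
    ∃ b ≤ p, (∀ i ≤ p, T b ≤ T i) ∧ ∀ i < b, T b < T i := by
  obtain ⟨m, hm, hmin⟩ := (Finset.range (p + 1)).exists_min_image T ⟨0, by simp⟩
  have hex : ∃ b, b ≤ p ∧ ∀ i ≤ p, T b ≤ T i :=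
    ⟨m, by simpa [Nat.lt_succ_iff] using hm, fun i hi => hmin i (by simpa [Nat.lt_succ_iff])⟩
  obtain ⟨hbp, hb⟩ := Nat.find_spec hex
  refine ⟨Nat.find hex, hbp, hb, fun i hi => ?_⟩
  obtain ⟨j, hj, hlt⟩ := not_forall₂.mp ((not_and.mp (Nat.find_min hex hi)) (by omega))
  exact (hb j hj).trans_lt (not_le.mp hlt)

theorem exists_last_minimizer (T : ℕ → ℤ) (p : ℕ) :
    ∃ c ≤ p, (∀ i ≤ p, T c ≤ T i) ∧ ∀ i ≤ p, c < i → T c < T i := by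
  obtain ⟨b, hbp, hmin, hfirst⟩ := exists_first_minimizer (fun i => T (p - i)) p
  refine ⟨p - b, by omega, fun i hi => ?_, fun i hi hci => ?_⟩
  · simpa [Nat.sub_sub_self hi] using hmin (p - i) (by omega)
  · simpa [Nat.sub_sub_self hi] using hfirst (p - i) (by omega)

section CycleLemma

variable {p : ℕ} {T : ℕ → ℤ} {ε : ℤ} {k k' : ℕ}

def IsCycleStart (p : ℕ) (T : ℕ → ℤ) (k : ℕ) : Prop :=
  (∀ j, k ≤ j → j ≤ k + p → T k ≤ T j) ∧ T (k + p) = T k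

theorem IsCycleStart.drift_eq_one_or_neg_one
    (hstep : ∀ m, T (m + 1) = T m + 1 ∨ T (m + 1) = T m - 1)
    (hper : ∀ m, T (m + (p + 1)) = T m + ε) (hk : IsCycleStart p T k) : ε = 1 ∨ ε = -1 := by
  have := hstep (k + p)
  have hwrap := hper k
  rw [← add_assoc] at hwrap
  have := hk.2
  omega

theorem IsCycleStart.of_add_period (hper : ∀ m, T (m + (p + 1)) = T m + ε)
    (hk : IsCycleStart p T (k + (p + 1))) : IsCycleStart p T k := by
  obtain ⟨hmin, hend⟩ := hk
  have hshift := hper k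
  refine ⟨fun j h₁ h₂ => ?_, ?_⟩
  · have := hmin (j + (p + 1)) (by omega) (by omega)
    have := hper j
    omega
  · have := hper (k + p)
    rw [show k + (p + 1) + p = k + p + (p + 1) by omega] at hend
    omega

theorem IsCycleStart.not_lt (hstep : ∀ m, T (m + 1) = T m + 1 ∨ T (m + 1) = T m - 1)
    (hper : ∀ m, T (m + (p + 1)) = T m + ε) (hk : IsCycleStart p T k)
    (hk' : IsCycleStart p T k') (hlt : k < k') (hk'p : k' ≤ p) : False := by
  have h₁ := hk.1 k' hlt.le (by omega)
  have h₂ := hk'.1 (k + (p + 1)) (by omega) (by omega)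
  have h₃ := hper k
  rcases hk.drift_eq_one_or_neg_one hstep hper with rfl | rfl
  · -- the step into `k'` is an ascent, so `T k ≤ T (k' - 1) < T k' ≤ T (k + p) = T k`
    have h₄ := hk.1 (k' - 1) (by omega) (by omega)
    have h₅ := hk'.1 (k + p) (by omega) (by omega)
    have h₆ := hper (k' - 1)
    rw [show k' - 1 + (p + 1) = k' + p by omega, hk'.2] at h₆
    have := hk.2
    omega
  · omega

theorem exists_isCycleStart_of_drift_eq_one
    (hstep : ∀ m, T (m + 1) = T m + 1 ∨ T (m + 1) = T m - 1)
    (hper : ∀ m, T (m + (p + 1)) = T m + 1) : ∃ k ≤ p, IsCycleStart p T k := by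
  -- start just after the last minimum of a period
  obtain ⟨c, hcp, hmin, hlast⟩ := exists_last_minimizer T p
  have hnext : ∀ j, c < j → j ≤ c + (p + 1) → T c + 1 ≤ T j := by
    intro j h₁ h₂
    by_cases hj : j ≤ p
    · exact hlast j hj h₁
    · have := hper (j - (p + 1))
      have := hmin (j - (p + 1)) (by omega)
      rw [Nat.sub_add_cancel (by omega)] at *
      omega
  have hc := hnext (c + 1) (by omega) (by omega)
  have := hstep c
  have := hper c
  have hstart : IsCycleStart p T (c + 1) := by
    refine ⟨fun j h₁ h₂ => ?_, ?_⟩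
    · have := hnext j (by omega) (by omega)
      omega
    · rw [show c + 1 + p = c + (p + 1) by omega]
      omega
  rcases hcp.lt_or_eq with hcp | rfl
  · exact ⟨c + 1, hcp, hstart⟩
  · exact ⟨0, Nat.zero_le _, IsCycleStart.of_add_period (k := 0) hper (by rwa [zero_add])⟩

theorem exists_isCycleStart_of_drift_eq_neg_one
    (hstep : ∀ m, T (m + 1) = T m + 1 ∨ T (m + 1) = T m - 1)
    (hper : ∀ m, T (m + (p + 1)) = T m + -1) : ∃ k ≤ p, IsCycleStart p T k := by
  -- start at the first minimum of a period
  obtain ⟨b, hbp, hmin, hfirst⟩ := exists_first_minimizer T p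
  refine ⟨b, hbp, fun j h₁ h₂ => ?_, ?_⟩
  · by_cases hj : j ≤ p
    · exact hmin j hj
    · have := hper (j - (p + 1))
      have := hfirst (j - (p + 1)) (by omega)
      rw [Nat.sub_add_cancel (by omega)] at *
      omega
  · rcases Nat.eq_zero_or_pos b with rfl | hb
    · have := hmin p le_rfl
      have := hstep p
      have := hper 0
      rw [zero_add] at *
      omega
    · have := hfirst (b - 1) (by omega)
      have := hstep (b - 1)
      have := hper (b - 1)
      rw [Nat.sub_add_cancel hb, show b - 1 + (p + 1) = b + p by omega] at *
      omega

theorem existsUnique_isCycleStart (hstep : ∀ m, T (m + 1) = T m + 1 ∨ T (m + 1) = T m - 1)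
    (hper : ∀ m, T (m + (p + 1)) = T m + ε) (hε : ε = 1 ∨ ε = -1) :
    ∃! k : Fin (p + 1), IsCycleStart p T k := by
  obtain ⟨k, hkp, hk⟩ : ∃ k ≤ p, IsCycleStart p T k := by
    rcases hε with rfl | rfl
    exacts [exists_isCycleStart_of_drift_eq_one hstep hper,
      exists_isCycleStart_of_drift_eq_neg_one hstep hper]
  refine ⟨⟨k, Nat.lt_succ_of_le hkp⟩, hk, fun k' hk' => Fin.ext ?_⟩
  by_contra hne
  rcases lt_or_gt_of_ne hne with hlt | hlt
  · exact hk'.not_lt hstep hper hk hlt hkp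
  · exact hk.not_lt hstep hper hk' hlt (Nat.lt_succ_iff.mp k'.2)

end CycleLemma

theorem sum_ite_neg_one_one {α : Type*} (s : Finset α) (P : α → Prop) [DecidablePred P] :
    ∑ i ∈ s, (if P i then -1 else 1 : ℤ) = #s - 2 * #{i ∈ s | P i} := by
  have hcard := card_filter_add_card_filter_not (s := s) P
  rw [sum_ite, sum_const, sum_const, ← hcard]
  simp only [smul_neg, nsmul_eq_mul, mul_one]
  push_cast
  ring

section CyclicHeight

variable {N : ℕ} [NeZero N]

def rotateBy (k : Fin N) (u : Perm (Fin N)) : Perm (Fin N) :=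
  (Equiv.addRight k).trans u

@[simp]
theorem rotateBy_apply (k : Fin N) (u : Perm (Fin N)) (j : Fin N) : rotateBy k u j = u (j + k) :=
  rfl

def IsCyclicDescent (u : Perm (Fin N)) (m : ℕ) : Prop :=
  u ((m + 1 : ℕ) : Fin N) < u (m : Fin N)

noncomputable def cyclicHeight (u : Perm (Fin N)) (m : ℕ) : ℤ :=
  ∑ i ∈ range m, if IsCyclicDescent u i then -1 else 1

theorem cyclicHeight_succ (u : Perm (Fin N)) (m : ℕ) :
    cyclicHeight u (m + 1) = cyclicHeight u m + 1 ∨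
      cyclicHeight u (m + 1) = cyclicHeight u m - 1 := by
  rw [cyclicHeight, sum_range_succ]
  split_ifs <;> simp [cyclicHeight, sub_eq_add_neg]

theorem isCyclicDescent_add_period (u : Perm (Fin N)) (m : ℕ) :
    IsCyclicDescent u (m + N) ↔ IsCyclicDescent u m := by
  simp [IsCyclicDescent, add_right_comm m N 1]

theorem cyclicHeight_add (u : Perm (Fin N)) (k ℓ : ℕ) :
    cyclicHeight u (k + ℓ) =
      cyclicHeight u k + ℓ - 2 * #{i ∈ range ℓ | IsCyclicDescent u (k + i)} := by
  rw [cyclicHeight, sum_range_add, ← cyclicHeight, sum_ite_neg_one_one, card_range]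
  ring

theorem cyclicHeight_add_period (u : Perm (Fin N)) (m : ℕ) :
    cyclicHeight u (m + N) = cyclicHeight u m + cyclicHeight u N := by
  rw [cyclicHeight, add_comm, sum_range_add, add_comm]
  simp only [cyclicHeight, add_comm N, isCyclicDescent_add_period]

theorem mk_add_eq_natCast {i : ℕ} (h : i < N) (k : Fin N) :
    (⟨i, h⟩ : Fin N) + k = ((k + i : ℕ) : Fin N) := by
  ext
  simp [Fin.val_add, Fin.val_natCast, add_comm]

theorem descentsIn_rotateBy (u : Perm (Fin N)) (k : Fin N) {ℓ : ℕ} (hℓ : ℓ < N) :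
    descentsIn (rotateBy k u) ℓ = #{i ∈ range ℓ | IsCyclicDescent u (k + i)} := by
  refine congrArg card (filter_congr fun i hi => ?_)
  have hi : i + 1 < N := by simp at hi; omega
  simp only [hi, exists_true_left, rotateBy_apply, mk_add_eq_natCast, IsCyclicDescent, add_assoc]

theorem cyclicHeight_add_of_lt (u : Perm (Fin N)) (k : Fin N) {ℓ : ℕ} (hℓ : ℓ < N) :
    cyclicHeight u (k + ℓ) = cyclicHeight u k + ℓ - 2 * descentsIn (rotateBy k u) ℓ := by
  rw [descentsIn_rotateBy u k hℓ, cyclicHeight_add]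

end CyclicHeight

theorem descentsIn_le {N : ℕ} (w : Perm (Fin N)) (ℓ : ℕ) : descentsIn w ℓ ≤ ℓ :=
  (card_filter_le _ _).trans (card_range ℓ).le

theorem isDyckPerm_rotateBy_iff {n : ℕ} (u : Perm (Fin (2 * n + 1))) (k : Fin (2 * n + 1)) :
    IsDyckPerm n (rotateBy k u) ↔ IsCycleStart (2 * n) (cyclicHeight u) k := by
  have hheight : ∀ ℓ ≤ 2 * n, cyclicHeight u (k + ℓ) =
      cyclicHeight u k + ℓ - 2 * descentsIn (rotateBy k u) ℓ := fun ℓ hℓ =>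
    cyclicHeight_add_of_lt u k (by omega)
  have hle := descentsIn_le (rotateBy k u)
  unfold IsDyckPerm IsCycleStart descents
  rw [Nat.add_sub_cancel, hheight _ le_rfl]
  constructor
  · rintro ⟨htotal, hpath⟩
    refine ⟨fun j h₁ h₂ => ?_, by omega⟩
    have := hpath (j - k) (by omega)
    have := hle (j - k)
    rw [← Nat.add_sub_cancel' h₁, hheight _ (by omega)]
    omega
  · rintro ⟨hmin, htotal⟩
    refine ⟨by omega, fun ℓ hℓ => ?_⟩
    have := hmin (k + ℓ) (by omega) (by omega)
    rw [hheight ℓ hℓ] at this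
    have := hle ℓ
    omega

section ConsZero

variable {N : ℕ}

def consZero (w : Perm (Fin N)) : Perm (Fin (N + 1)) :=
  Perm.decomposeFin.symm (0, w)

@[simp]
theorem consZero_zero (w : Perm (Fin N)) : consZero w 0 = 0 :=
  Perm.decomposeFin_symm_apply_zero 0 w

@[simp]
theorem consZero_succ (w : Perm (Fin N)) (j : Fin N) : consZero w j.succ = (w j).succ := by
  simp [consZero, Perm.decomposeFin_symm_apply_succ]

theorem natCast_succ_eq_succ {i : ℕ} (h : i < N) :
    ((i + 1 : ℕ) : Fin (N + 1)) = Fin.succ ⟨i, h⟩ := by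
  ext
  exact Fin.val_cast_of_lt (Nat.succ_lt_succ h)

theorem isCyclicDescent_consZero_succ (w : Perm (Fin N)) {j : ℕ} (h : j + 1 < N) :
    IsCyclicDescent (consZero w) (j + 1) ↔ w ⟨j + 1, h⟩ < w ⟨j, by omega⟩ := by
  rw [IsCyclicDescent, natCast_succ_eq_succ h, natCast_succ_eq_succ (by omega), consZero_succ,
    consZero_succ, Fin.succ_lt_succ_iff]

theorem cyclicHeight_consZero (hN : 1 ≤ N) (w : Perm (Fin N)) :
    cyclicHeight (consZero w) (N + 1) = N - 1 - 2 * descents w := by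
  obtain ⟨M, rfl⟩ : ∃ M, N = M + 1 := ⟨N - 1, by omega⟩
  have hfirst : ¬IsCyclicDescent (consZero w) 0 := by
    simp [IsCyclicDescent, natCast_succ_eq_succ (Nat.succ_pos M)]
  have hlast : IsCyclicDescent (consZero w) (M + 1) := by
    rw [IsCyclicDescent, natCast_succ_eq_succ (Nat.lt_succ_self M), consZero_succ]
    simp [Fin.succ_pos]
  have hmiddle : #{j ∈ range M | IsCyclicDescent (consZero w) (j + 1)} = descents w := by
    refine congrArg card (filter_congr fun j hj => ?_)
    have hj : j + 1 < M + 1 := by simp at hj; omega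
    simp only [isCyclicDescent_consZero_succ w hj, hj, exists_true_left]
  rw [cyclicHeight, sum_range_succ, sum_range_succ', sum_ite_neg_one_one, card_range, hmiddle,
    if_neg hfirst, if_pos hlast]
  push_cast
  ring

end ConsZero

theorem rotateBy_consZero_bijective {N : ℕ} :
    Function.Bijective fun x : Fin (N + 1) × Perm (Fin N) => rotateBy x.1 (consZero x.2) := by
  refine (Fintype.bijective_iff_injective_and_card _).mpr
    ⟨fun ⟨k, w⟩ ⟨k', w'⟩ h => ?_, by simp [Fintype.card_perm, Nat.factorial_succ]⟩
  -- `rotateBy k (consZero w)` takes the value `0` exactly at position `-k`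
  have hk : k = k' := by
    have := congrArg (· (-k)) h
    simp only [rotateBy_apply, neg_add_cancel, consZero_zero] at this
    have := ((consZero w').injective.eq_iff' (consZero_zero w')).mp this.symm
    rwa [neg_add_eq_zero] at this
  subst hk
  have hw : consZero w = consZero w' := Equiv.ext fun j => by
    simpa using congrArg (· (j - k)) h
  have := Perm.decomposeFin.symm.injective hw
  simp_all

theorem card_filter_isDyckPerm_rotateBy_consZero {n : ℕ} (hn : 1 ≤ n) (w : Perm (Fin (2 * n))) :
    #{k | IsDyckPerm n (rotateBy k (consZero w))} =
      if descents w = n - 1 ∨ descents w = n then 1 else 0 := by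
  have hstep := cyclicHeight_succ (consZero w)
  have hper := cyclicHeight_add_period (consZero w)
  have hdrift : (cyclicHeight (consZero w) (2 * n + 1) = 1 ∨
      cyclicHeight (consZero w) (2 * n + 1) = -1) ↔ (descents w = n - 1 ∨ descents w = n) := by
    rw [cyclicHeight_consZero (by omega)]
    omega
  simp only [isDyckPerm_rotateBy_iff]
  split_ifs with h
  · obtain ⟨k, hk, huniq⟩ := existsUnique_isCycleStart hstep hper (hdrift.mpr h)
    exact card_eq_one.mpr
      ⟨k, eq_singleton_iff_unique_mem.mpr ⟨by simpa using hk, by simpa using huniq⟩⟩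
  · exact card_eq_zero.mpr (filter_eq_empty_iff.mpr fun k _ hk =>
      h (hdrift.mp (hk.drift_eq_one_or_neg_one hstep hper)))

/-- The number of permutations of `[2n+1]` with exactly `n` descents whose
lattice path is a Dyck path equals the number of permutations of `[2n]` with
`n-1` or `n` descents, which is `A(n-1,2n) + A(n,2n)` (the bijection cycles
the permutation until `2n+1` is last and deletes it). -/
theorem card_dyckPerm_eq_card_perms (n : ℕ) (hn : 1 ≤ n) :
    (Finset.univ.filter (fun w : Equiv.Perm (Fin (2 * n + 1)) => IsDyckPerm n w)).card
        = (Finset.univ.filter (fun w' : Equiv.Perm (Fin (2 * n)) =>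
            descents w' = n - 1 ∨ descents w' = n)).card ∧
    (Finset.univ.filter (fun w' : Equiv.Perm (Fin (2 * n)) =>
        descents w' = n - 1 ∨ descents w' = n)).card
      = eulerian (n - 1) (2 * n) + eulerian n (2 * n) := by
  refine ⟨?_, ?_⟩
  · calc #{w | IsDyckPerm n w}
        = #{x : Fin (2 * n + 1) × Perm (Fin (2 * n)) |
            IsDyckPerm n (rotateBy x.1 (consZero x.2))} :=
          (card_equiv (Equiv.ofBijective _ rotateBy_consZero_bijective) (by simp)).symm
      _ = ∑ w : Perm (Fin (2 * n)), #{k | IsDyckPerm n (rotateBy k (consZero w))} := by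
          simp only [card_filter]
          exact Fintype.sum_prod_type_right _
      _ = #{w : Perm (Fin (2 * n)) | descents w = n - 1 ∨ descents w = n} := by
          simp only [card_filter_isDyckPerm_rotateBy_consZero hn, card_filter]
  · rw [eulerian, eulerian, filter_or]
    exact card_union_of_disjoint (disjoint_filter.mpr fun _ _ h => by omega)
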